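/- arXiv:1403.5454 — 6 statements merged into one kernel-verified Lean document; each statement's English description precedes it below -/
import Mathlib

section
/- Let F be a field, n ≥ 1, and let T : Mₙ(F) → Mₙ(F) be the trace of an n-linear function F₀ (i.e., T(x) = F₀(x,...,x)). Suppose F₀(1,...,1) = 1 and char(F) = 0 or char(F) > n. If there exist multilinear functions F₁,...,Fₙ : Mₙ(F)ⁿ → Mₙ(F) such that Σ_{k=1}^{n} Fₖ(x₁,...,x̂ₖ,...,x_{n+1}) xₖ + F₀(x₁,...,xₙ) x_{n+1} = 0 for all x₁,...,x_{n+1} ∈ Mₙ(F), then T(x) = det(x)·1 for all x ∈ Mₙ(F). -/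
/-!
The functional identity says that `F₀(x₁,…,xₙ) y` lies in the left ideal generated by
`x₁,…,xₙ` for every `y`. Since `y w` runs through all vectors when `w ≠ 0`, `F₀` vanishes as soon
as the `xₖ` have a common nonzero null vector. Expanding `F₀(x,…,x)` column by column, this kills
every term in which some column of `x` is not used, leaving a sum over permutations that is an
alternating multilinear function of the columns of `x`. Such a function is `det x` times its value
`F₀(1,…,1) = 1` on the identity.
-/

open Matrix

theorem Fintype.sum_eq_sum_perm_of_not_injective {α M : Type*} [Fintype α] [DecidableEq α]
    [AddCommMonoid M] (g : (α → α) → M) (hg : ∀ f, ¬ Function.Injective f → g f = 0) :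
    ∑ f, g f = ∑ σ : Equiv.Perm α, g σ := by
  let coeEmb : Equiv.Perm α ↪ (α → α) := ⟨(⇑), DFunLike.coe_injective⟩
  rw [show ∑ σ : Equiv.Perm α, g σ = ∑ f ∈ Finset.univ.map coeEmb, g f from
    (Finset.sum_map _ coeEmb g).symm]
  refine (Finset.sum_subset (Finset.subset_univ _) fun f _ hf => hg f fun hinj => hf ?_).symm
  exact Finset.mem_map.2
    ⟨Equiv.ofBijective f (Finite.injective_iff_bijective.1 hinj), Finset.mem_univ _, rfl⟩

theorem AlternatingMap.eq_basis_det_smulRight {R M N ι : Type*} [CommRing R] [AddCommGroup M]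
    [Module R M] [AddCommGroup N] [Module R N] [Fintype ι] [DecidableEq ι]
    (e : Module.Basis ι R M) (f : M [⋀^ι]→ₗ[R] N) : f = e.det.smulRight (f e) := by
  refine e.ext_alternating fun v hv => ?_
  let σ : Equiv.Perm ι := Equiv.ofBijective v (Finite.injective_iff_bijective.1 hv)
  change f (e ∘ σ) = e.det.smulRight (f e) (e ∘ σ)
  simp [AlternatingMap.map_perm, Module.Basis.det_self]

namespace Matrix

variable {m : Type*} [Fintype m] [DecidableEq m]

theorem exists_mulVec_eq {K : Type*} [DivisionRing K] {w : m → K} (hw : w ≠ 0) (u : m → K) :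
    ∃ y : Matrix m m K, y *ᵥ w = u := by
  obtain ⟨j, hj⟩ := Function.ne_iff.1 hw
  refine ⟨vecMulVec u (Pi.single j (w j)⁻¹), ?_⟩
  rw [vecMulVec_mulVec, single_dotProduct, inv_mul_cancel₀ hj, MulOpposite.op_one, one_smul]

theorem mulVec_eq_zero_of_mem_span {R : Type*} [Semiring R] {s : Set (Matrix m m R)}
    {w : m → R} (hs : ∀ a ∈ s, a *ᵥ w = 0) {b : Matrix m m R} (hb : b ∈ Ideal.span s) :
    b *ᵥ w = 0 := by
  induction hb using Submodule.span_induction with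
  | mem a ha => exact hs a ha
  | zero => exact zero_mulVec w
  | add a b _ _ ha hb => rw [add_mulVec, ha, hb, add_zero]
  | smul c a _ ha => rw [smul_eq_mul, ← mulVec_mulVec, ha, mulVec_zero]

theorem eq_zero_of_mul_mem_span {K : Type*} [DivisionRing K] {s : Set (Matrix m m K)}
    {w : m → K} (hw : w ≠ 0) (hs : ∀ a ∈ s, a *ᵥ w = 0) {z : Matrix m m K}
    (hz : ∀ y, z * y ∈ Ideal.span s) : z = 0 := by
  refine mulVec_injective (funext fun u => ?_)
  obtain ⟨y, rfl⟩ := exists_mulVec_eq hw u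
  rw [mulVec_mulVec, mulVec_eq_zero_of_mem_span hs (hz y), zero_mulVec]

def VanishesOnCommonKernel {ι R A : Type*} [Semiring R] [Zero A]
    (Φ : (ι → Matrix m m R) → A) : Prop :=
  ∀ (x : ι → Matrix m m R) (w : m → R), w ≠ 0 → (∀ k, x k *ᵥ w = 0) → Φ x = 0

theorem vanishesOnCommonKernel_of_mul_mem_span {ι K : Type*} [DivisionRing K]
    {Φ : (ι → Matrix m m K) → Matrix m m K} (h : ∀ x y, Φ x * y ∈ Ideal.span (Set.range x)) :
    VanishesOnCommonKernel Φ := fun x _ hw hxw =>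
  eq_zero_of_mul_mem_span hw (by rintro _ ⟨k, rfl⟩; exact hxw k) (h x)

section ColumnExpansion

variable (R : Type*) [CommRing R]

def singleColumn (j : m) : (m → R) →ₗ[R] Matrix m m R :=
  (vecMulVecBilin R R).flip (Pi.single j 1)

variable {R}

theorem singleColumn_mulVec (j : m) (c w : m → R) : singleColumn R j c *ᵥ w = w j • c := by
  simp [singleColumn, vecMulVec_mulVec, single_dotProduct]

theorem sum_singleColumn_col (x : Matrix m m R) : ∑ j, singleColumn R j (x.col j) = x := by
  ext a b
  simp [singleColumn, vecMulVec_apply, sum_apply, Pi.single_apply]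

variable {A : Type*} [AddCommGroup A] [Module R A]
  (Φ : MultilinearMap R (fun _ : m => Matrix m m R) A)

def columnSymmetrization : MultilinearMap R (fun _ : m => m → R) A :=
  ∑ σ : Equiv.Perm m, (Φ.compLinearMap fun i => singleColumn R (σ i)).domDomCongr σ

variable {Φ}

theorem VanishesOnCommonKernel.columnSymmetrization_col [Nontrivial R]
    (hΦ : VanishesOnCommonKernel Φ) (x : Matrix m m R) :
    columnSymmetrization Φ x.col = Φ (fun _ => x) := by
  have hvanish : ∀ f : m → m, ¬ Function.Injective f →
      Φ (fun i => singleColumn R (f i) (x.col (f i))) = 0 := fun f hf => by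
    obtain ⟨j₀, hj₀⟩ : ∃ j₀, ∀ k, f k ≠ j₀ := by
      simpa [Function.Surjective] using mt Finite.injective_iff_surjective.2 hf
    refine hΦ _ (Pi.single j₀ 1) (Pi.single_ne_zero_iff.2 one_ne_zero) fun k => ?_
    rw [singleColumn_mulVec, Pi.single_eq_of_ne (hj₀ k), zero_smul]
  calc columnSymmetrization Φ x.col
      = ∑ σ : Equiv.Perm m, Φ (fun i => singleColumn R (σ i) (x.col (σ i))) := by
        simp [columnSymmetrization]
    _ = ∑ f : m → m, Φ (fun i => singleColumn R (f i) (x.col (f i))) :=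
        (Fintype.sum_eq_sum_perm_of_not_injective _ hvanish).symm
    _ = Φ (fun _ => ∑ j, singleColumn R j (x.col j)) :=
        (Φ.map_sum fun _ j => singleColumn R j (x.col j)).symm
    _ = Φ (fun _ => x) := by rw [sum_singleColumn_col]

def VanishesOnCommonKernel.columnAlternatization [Nontrivial R]
    (hΦ : VanishesOnCommonKernel Φ) : (m → R) [⋀^m]→ₗ[R] A where
  toMultilinearMap := columnSymmetrization Φ
  map_eq_zero_of_eq' c i j hc hij := by
    change columnSymmetrization Φ c = 0
    rw [← of_col c, hΦ.columnSymmetrization_col]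
    refine hΦ _ (Pi.single i 1 - Pi.single j 1) ?_ fun _ => ?_
    · simpa [sub_eq_zero] using (Pi.basisFun R m).injective.ne hij
    · rw [mulVec_sub, mulVec_single_one, mulVec_single_one, of_col, hc, sub_self]

theorem VanishesOnCommonKernel.map_const_eq_det_smul [Nontrivial R]
    (hΦ : VanishesOnCommonKernel Φ) (x : Matrix m m R) :
    Φ (fun _ => x) = x.det • Φ (fun _ => 1) := by
  have hbasis : ⇑(Pi.basisFun R m) = (1 : Matrix m m R).col := by
    ext i j
    simp [one_apply, Pi.single_apply, eq_comm]
  calc Φ (fun _ => x) = hΦ.columnAlternatization x.col := (hΦ.columnSymmetrization_col x).symm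
    _ = (Pi.basisFun R m).det x.col • hΦ.columnAlternatization (Pi.basisFun R m) :=
        DFunLike.congr_fun (AlternatingMap.eq_basis_det_smulRight _ _) _
    _ = x.det • Φ (fun _ => 1) := by
        rw [Pi.basisFun_det_apply, hbasis, col_eq_transpose, Equiv.apply_symm_apply,
          det_transpose]
        exact congrArg _ (hΦ.columnSymmetrization_col 1)

end ColumnExpansion

end Matrix

theorem trace_eq_det_of_leftFI_general {F : Type*} [Field F] (n : ℕ)
    (F₀ : MultilinearMap F (fun _ : Fin n => Matrix (Fin n) (Fin n) F)
      (Matrix (Fin n) (Fin n) F))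
    (hone : F₀ (fun _ => 1) = 1)
    (hFI : ∃ G : Fin n → MultilinearMap F (fun _ : Fin n => Matrix (Fin n) (Fin n) F)
        (Matrix (Fin n) (Fin n) F),
      ∀ x : Fin (n + 1) → Matrix (Fin n) (Fin n) F,
        (∑ k : Fin n, G k (fun i => x ((k.castSucc).succAbove i)) * x k.castSucc) +
          F₀ (fun i => x i.castSucc) * x (Fin.last n) = 0) :
    ∀ x : Matrix (Fin n) (Fin n) F, F₀ (fun _ => x) = Matrix.det x • 1 := by
  obtain ⟨G, hG⟩ := hFI
  have hspan : ∀ (x : Fin n → Matrix (Fin n) (Fin n) F) (y : Matrix (Fin n) (Fin n) F),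
      F₀ x * y ∈ Ideal.span (Set.range x) := fun x y => by
    have hxy := hG (Fin.snoc x y)
    simp only [Fin.snoc_castSucc, Fin.snoc_last] at hxy
    rw [eq_neg_of_add_eq_zero_right hxy]
    exact neg_mem (sum_mem fun k _ => Ideal.mul_mem_left _ _ (Ideal.subset_span ⟨k, rfl⟩))
  intro x
  rw [(vanishesOnCommonKernel_of_mul_mem_span hspan).map_const_eq_det_smul x, hone]

/-- Characterization of the determinant via a left-sided functional identity: if `F₀` is
`n`-linear with `F₀(1,...,1) = 1` and there are multilinear `F₁,...,Fₙ` with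
`Σₖ Fₖ(x₁,...,x̂ₖ,...,x_{n+1})xₖ + F₀(x₁,...,xₙ)x_{n+1} = 0` on `Mₙ(F)`
(`char F = 0` or `char F > n`), then the trace of `F₀` is `det(x)·1`. -/
theorem trace_eq_det_of_leftFI {F : Type*} [Field F] (n : ℕ) (hn : 1 ≤ n)
    (hchar : ∀ p : ℕ, CharP F p → p = 0 ∨ n < p)
    (F₀ : MultilinearMap F (fun _ : Fin n => Matrix (Fin n) (Fin n) F)
      (Matrix (Fin n) (Fin n) F))
    (hone : F₀ (fun _ => 1) = 1)
    (hFI : ∃ G : Fin n → MultilinearMap F (fun _ : Fin n => Matrix (Fin n) (Fin n) F)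
        (Matrix (Fin n) (Fin n) F),
      ∀ x : Fin (n + 1) → Matrix (Fin n) (Fin n) F,
        (∑ k : Fin n, G k (fun i => x ((k.castSucc).succAbove i)) * x k.castSucc) +
          F₀ (fun i => x i.castSucc) * x (Fin.last n) = 0) :
    ∀ x : Matrix (Fin n) (Fin n) F, F₀ (fun _ => x) = Matrix.det x • 1 :=
  trace_eq_det_of_leftFI_general n F₀ hone hFI
end

section
/- Let c ≥ 1, let R be a commutative ring, and let x^{(q)}_{ij} (1 ≤ i,j ≤ c, 1 ≤ q ≤ c) be elements of R arranged so that for each q we have a c×c array. For σ ∈ S_c let Y_σ be the c×c matrix with (i,ℓ)-entry x^{(ℓ)}_{i,σ(ℓ)}, and for τ ∈ S_c let Z_τ be the c×c matrix with (ℓ,j)-entry x^{(ℓ)}_{τ(ℓ),j}. Then Σ_{σ ∈ S_c} sgn(σ) det(Y_σ) = Σ_{τ ∈ S_c} sgn(τ) det(Z_τ). -/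
/-- Symmetry between alternating sums of determinants formed column-wise and row-wise:
for `Y_σ` with `(i,ℓ)`-entry `x^{(ℓ)}_{i,σ(ℓ)}` and `Z_τ` with `(ℓ,j)`-entry
`x^{(ℓ)}_{τ(ℓ),j}`, one has `Σ_σ sgn(σ) det(Y_σ) = Σ_τ sgn(τ) det(Z_τ)`. -/
theorem alternating_det_col_row_symm {R : Type*} [CommRing R] (c : ℕ) (hc : 1 ≤ c)
    (x : Fin c → Fin c → Fin c → R) :
    ∑ σ : Equiv.Perm (Fin c),
        (Equiv.Perm.sign σ : ℤ) • Matrix.det (Matrix.of fun i ℓ => x ℓ i (σ ℓ))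
      = ∑ τ : Equiv.Perm (Fin c),
        (Equiv.Perm.sign τ : ℤ) • Matrix.det (Matrix.of fun ℓ j => x ℓ (τ ℓ) j) := by
  have h : ∀ τ : Equiv.Perm (Fin c),
      Matrix.det (Matrix.of fun ℓ j => x ℓ (τ ℓ) j)
        = Matrix.det (Matrix.transpose (Matrix.of fun ℓ j => x ℓ (τ ℓ) j)) :=
    fun τ => (Matrix.det_transpose _).symm
  simp only [h]
  simp only [Matrix.det_apply, Matrix.transpose_apply, Matrix.of_apply, Finset.smul_sum]
  rw [Finset.sum_comm]
  refine Finset.sum_congr rfl fun τ _ => Finset.sum_congr rfl fun π _ => ?_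
  rw [smul_comm]
  simp [Units.smul_def]
end

section
/- Let F be a field, n ≥ 1, m ≤ n, and let F₁,...,Fₘ : Mₙ(F)^{m-1} → Mₙ(F) be multilinear functions satisfying Σ_{k=1}^{m} Fₖ(x₁,...,x̂ₖ,...,xₘ) xₖ = 0 for all x₁,...,xₘ ∈ Mₙ(F). Then Fₖ = 0 for every k. -/
/-!
Since `m ≤ n`, any `m - 1` matrix units `e_{p_i c_i}` leave some column `b` unused. Substituting
them together with `x_k = e_{s b}` into the identity and reading off the `(r, b)` entry, every
summand but the `k`-th vanishes, because `A e_{p c}` is supported in column `c ≠ b`; the `k`-th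
gives `Fₖ(e_{p_1 c_1}, …)_{r s} = 0`. As matrix units form a basis, multilinearity gives `Fₖ = 0`.
-/

open Matrix

theorem Fintype.exists_forall_ne_of_card_lt {α β : Type*} [Fintype α] [Fintype β] (f : α → β)
    (h : Fintype.card α < Fintype.card β) : ∃ b, ∀ a, f a ≠ b := by
  have hf : ¬ Function.Surjective f := fun hf => (Fintype.card_le_of_surjective f hf).not_gt h
  simpa [Function.Surjective] using hf

theorem MultilinearMap.eq_zero_of_apply_single_eq_zero {R ι m n N : Type*} [CommSemiring R]
    [Finite ι] [Fintype m] [Finite n] [DecidableEq m] [DecidableEq n]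
    [AddCommMonoid N] [Module R N] {f : MultilinearMap R (fun _ : ι => Matrix m n R) N}
    (h : ∀ (p : ι → m) (c : ι → n), f (fun i => single (p i) (c i) 1) = 0) : f = 0 :=
  Module.Basis.ext_multilinear (fun _ => stdBasis R m n) fun v => by
    simpa only [← stdBasis_eq_single, _root_.zero_apply] using
      h (fun i => (v i).1) (fun i => (v i).2)

theorem apply_single_eq_zero_of_sum_mul_eq_zero {R n : Type*} [CommSemiring R] [Fintype n]
    [DecidableEq n] {m : ℕ}
    {G : Fin (m + 1) → MultilinearMap R (fun _ : Fin m => Matrix n n R) (Matrix n n R)}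
    (hG : ∀ x : Fin (m + 1) → Matrix n n R,
      ∑ k : Fin (m + 1), G k (fun i => x (k.succAbove i)) * x k = 0)
    (k : Fin (m + 1)) (p c : Fin m → n) {b : n} (hb : ∀ i, c i ≠ b) :
    G k (fun i => single (p i) (c i) 1) = 0 := by
  ext r s
  have hentry := congrFun (congrFun (hG (Fin.insertNth (α := fun _ => Matrix n n R) k
    (single s b 1) fun i => single (p i) (c i) 1)) r) b
  rw [Matrix.sum_apply, Finset.sum_eq_single k] at hentry
  · simpa using hentry
  · intro j _ hj
    obtain ⟨i, rfl⟩ := Fin.exists_succAbove_eq hj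
    rw [Fin.insertNth_apply_succAbove]
    exact mul_single_apply_of_ne _ _ _ r b (hb i).symm _
  · exact fun hk => absurd (Finset.mem_univ k) hk

/-- Left-sided functional identities on `Mₙ(F)` in `m ≤ n` variables have only the
standard solution: if `Σ_{k=1}^{m} Fₖ(x₁,...,x̂ₖ,...,xₘ)xₖ = 0` holds on `Mₙ(F)` with
each `Fₖ` multilinear and `m ≤ n`, then every `Fₖ = 0`.  (Here `m = m' + 1`.) -/
theorem leftFI_standard_of_le {F : Type*} [Field F] (n m' : ℕ) (hm : m' + 1 ≤ n)
    (G : Fin (m' + 1) → MultilinearMap F (fun _ : Fin m' => Matrix (Fin n) (Fin n) F)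
      (Matrix (Fin n) (Fin n) F))
    (hFI : ∀ x : Fin (m' + 1) → Matrix (Fin n) (Fin n) F,
      ∑ k : Fin (m' + 1), G k (fun i => x (k.succAbove i)) * x k = 0) :
    ∀ k, G k = 0 := by
  intro k
  refine MultilinearMap.eq_zero_of_apply_single_eq_zero fun p c => ?_
  obtain ⟨b, hb⟩ := Fintype.exists_forall_ne_of_card_lt c (by simpa using hm)
  exact apply_single_eq_zero_of_sum_mul_eq_zero hFI k p c hb
end

section
/- Let F be a field and n ≥ 1, and let Φ : Mₙ(F) → Mₙ(F) satisfy Φ(x)·x = 0 for all x ∈ Mₙ(F), where Φ(x) = P(x,...,x) is the trace of an r-linear function P. Then Φ = 0. -/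
open Matrix

set_option maxRecDepth 16000

/-- If `Φ` is the trace of an `r`-linear function `P` on `Mₙ(F)` and `Φ(x)·x = 0` for all
`x`, then `Φ = 0` (`char F = 0` or `char F > r`). -/
theorem trace_eq_zero_of_mul_right_eq_zero {F : Type*} [Field F] (n r : ℕ) (hn : 1 ≤ n)
    (hchar : ∀ p : ℕ, CharP F p → p = 0 ∨ r < p)
    (P : MultilinearMap F (fun _ : Fin r => Matrix (Fin n) (Fin n) F)
      (Matrix (Fin n) (Fin n) F))
    (h : ∀ x : Matrix (Fin n) (Fin n) F, P (fun _ => x) * x = 0) :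
    ∀ x : Matrix (Fin n) (Fin n) F, P (fun _ => x) = 0 := by
  classical
  intro x
  -- r+1 distinct elements of F
  obtain ⟨p, hp⟩ := CharP.exists F
  have hinj : Function.Injective (fun k : Fin (r + 1) => ((k : ℕ) : F)) := by
    intro i j hij
    rcases hchar p hp with h0 | hlt
    · rw [h0] at hp
      haveI := hp
      haveI : CharZero F := CharP.charP_to_charZero F
      exact Fin.ext (Nat.cast_injective hij)
    · exact Fin.ext (CharP.natCast_injOn_Iio F p (Set.mem_Iio.2 (i.2.trans_le hlt))
        (Set.mem_Iio.2 (j.2.trans_le hlt)) hij)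
  obtain ⟨A, hA⟩ : ∃ A : ℕ → Matrix (Fin n) (Fin n) F, A = fun j =>
      ∑ s ∈ Finset.univ.powersetCard j,
        P (s.piecewise (fun _ => (1 : Matrix (Fin n) (Fin n) F)) (fun _ => x)) := ⟨_, rfl⟩
  have hA0 : A 0 = P (fun _ => x) := by
    simp [hA, Finset.powersetCard_zero]
  have hAr : A r = 0 := by
    have : A r = P (fun _ => 1) := by
      simp only [hA]
      rw [show Finset.powersetCard r (Finset.univ : Finset (Fin r))
          = {Finset.univ} by
        simpa using Finset.powersetCard_self (Finset.univ : Finset (Fin r))]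
      simp
    rw [this]
    have := h 1
    rwa [mul_one] at this
  have hAbig : ∀ j, r < j → A j = 0 := by
    intro j hj
    simp only [hA]
    have : Finset.powersetCard j (Finset.univ : Finset (Fin r)) = ∅ := by
      rw [Finset.powersetCard_eq_empty]
      simpa using hj
    simp [this]
  -- expansion
  have hexp : ∀ t : F, P (fun _ => x + t • 1)
      = ∑ j ∈ Finset.range (r + 1), t ^ j • A j := by
    intro t
    have h1 : (fun _ : Fin r => x + t • 1)
        = (fun _ => t • (1 : Matrix (Fin n) (Fin n) F)) + (fun _ => x) := by
      funext i; simp [add_comm]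
    rw [h1, P.map_add_univ]
    have hterm : ∀ s : Finset (Fin r),
        P (s.piecewise (fun _ => t • 1) (fun _ => x))
          = t ^ s.card • P (s.piecewise (fun _ => 1) (fun _ => x)) := by
      intro s
      have hkey := P.map_piecewise_smul (fun _ => t)
        (s.piecewise (fun _ => (1 : Matrix (Fin n) (Fin n) F)) (fun _ => x)) s
      rw [Finset.prod_const] at hkey
      rw [← hkey]
      congr 1
      funext i
      by_cases hi : i ∈ s <;> simp [Finset.piecewise, hi]
    calc ∑ s : Finset (Fin r), P (s.piecewise (fun _ => t • 1) (fun _ => x))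
        = ∑ s : Finset (Fin r),
            t ^ s.card • P (s.piecewise (fun _ => 1) (fun _ => x)) := by
          exact Finset.sum_congr rfl fun s _ => hterm s
      _ = ∑ j ∈ Finset.range (r + 1), t ^ j • A j := by
          rw [← Finset.powerset_univ, Finset.sum_powerset]
          simp only [Finset.card_univ, Fintype.card_fin]
          refine Finset.sum_congr rfl fun j _ => ?_
          rw [hA, Finset.smul_sum]
          refine Finset.sum_congr rfl fun s hs => ?_
          rw [Finset.mem_powersetCard] at hs
          rw [hs.2]
  -- coefficients of the relation
  obtain ⟨Cc, hCc⟩ : ∃ Cc : ℕ → Matrix (Fin n) (Fin n) F, Cc = fun k =>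
      A k * x + (if k = 0 then 0 else A (k - 1)) := ⟨_, rfl⟩
  have h2 : ∀ t : F, ∑ k ∈ Finset.range (r + 2), t ^ k • Cc k = 0 := by
    intro t
    have hmain := h (x + t • 1)
    rw [hexp t, Finset.sum_mul] at hmain
    have hsplit : ∀ j, (t ^ j • A j) * (x + t • 1)
        = t ^ j • (A j * x) + t ^ (j + 1) • A j := by
      intro j
      rw [mul_add, smul_mul_assoc, smul_mul_assoc]
      congr 1
      rw [Matrix.mul_smul, mul_one, smul_smul, pow_succ]
    simp only [hsplit, Finset.sum_add_distrib] at hmain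
    have hsum : ∑ k ∈ Finset.range (r + 2), t ^ k • Cc k
        = (∑ j ∈ Finset.range (r + 1), t ^ j • (A j * x))
          + ∑ j ∈ Finset.range (r + 1), t ^ (j + 1) • A j := by
      simp only [hCc, smul_add, Finset.sum_add_distrib]
      congr 1
      · rw [Finset.sum_range_succ, hAbig (r + 1) (by omega)]
        simp
      · rw [Finset.sum_range_succ']
        simp [pow_succ, mul_comm]
    rw [hsum, hmain]
  -- each coefficient vanishes
  have hCzero : ∀ k, k < r + 2 → Cc k = 0 := by
    intro k hk
    ext i j
    obtain ⟨q, hq⟩ : ∃ q : Polynomial F,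
        q = ∑ m ∈ Finset.range (r + 2), Polynomial.C (Cc m i j) * Polynomial.X ^ m := ⟨_, rfl⟩
    have heval : ∀ t : F, q.eval t = 0 := by
      intro t
      have h3 : (∑ k ∈ Finset.range (r + 2), t ^ k • Cc k) i j = 0 := by
        rw [h2 t, Matrix.zero_apply]
      simp only [Matrix.sum_apply, Matrix.smul_apply, smul_eq_mul] at h3
      rw [hq, Polynomial.eval_finset_sum, ← h3]
      refine Finset.sum_congr rfl fun m _ => ?_
      rw [Polynomial.eval_mul, Polynomial.eval_C, Polynomial.eval_pow, Polynomial.eval_X,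
        mul_comm]
    have hC0 : Cc (r + 1) i j = 0 := by
      have hCr : Cc (r + 1) = 0 := by
        simp only [hCc]
        rw [hAbig (r + 1) (by omega), if_neg (Nat.succ_ne_zero r), Nat.add_sub_cancel, hAr]
        rw [zero_mul, add_zero]
      rw [hCr, Matrix.zero_apply]
    have hdeg : q.natDegree ≤ r := by
      rw [hq, Finset.sum_range_succ, hC0]
      simp only [Polynomial.C_0, zero_mul, add_zero]
      refine Polynomial.natDegree_sum_le_of_forall_le _ _ fun m hm => ?_
      rw [Finset.mem_range] at hm
      calc (Polynomial.C (Cc m i j) * Polynomial.X ^ m).natDegree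
          ≤ (Polynomial.C (Cc m i j)).natDegree + (Polynomial.X ^ m : Polynomial F).natDegree :=
            Polynomial.natDegree_mul_le
        _ ≤ r := by simp [Polynomial.natDegree_X_pow]; omega
    have hq0 : q = 0 := by
      refine Polynomial.eq_zero_of_natDegree_lt_card_of_eval_eq_zero q hinj
        (fun i => heval _) ?_
      simpa using Nat.lt_succ_of_le hdeg
    have := congrArg (fun h => Polynomial.coeff h k) hq0
    simpa [hq, Polynomial.finset_sum_coeff, Polynomial.coeff_C_mul,
      Polynomial.coeff_X_pow, Finset.sum_ite_eq', hk] using this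
  -- downward induction
  have hdown : ∀ j, A (r - j) = 0 := by
    intro j
    induction j with
    | zero => simpa using hAr
    | succ j ih =>
      by_cases hjr : r ≤ j
      · rw [show r - (j + 1) = r - j by omega]; exact ih
      · have hk : 1 ≤ r - j := by omega
        have hc := hCzero (r - j) (by omega)
        rw [hCc] at hc
        simp only [if_neg (by omega : ¬ r - j = 0)] at hc
        rw [ih, zero_mul, zero_add] at hc
        rw [show r - (j + 1) = r - j - 1 by omega]
        exact hc
  have := hdown r
  rwa [Nat.sub_self, hA0] at this
end

section
/- Let F be a field, n ≥ 1, and let P : Mₙ(F) → Mₙ(F) be the trace of an r-linear function such that x·[P(x), x] = 0 for all x ∈ Mₙ(F). Assume char(F) = 0 or char(F) > r. Then [P(x), x] = 0 for all x ∈ Mₙ(F), i.e., P is commuting. -/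
/-!
Substituting `x + t` for a scalar `t ∈ F`, the hypothesis says that the matrix polynomial
`G(X) = (x + X) ⁅P(x + X), x + X⁆`, of degree `≤ r + 1`, vanishes at every scalar.
If `F` has more than `r + 1` elements then `G = 0`, and since `X + x` is monic,
`⁅P(x + X), x⁆ = 0`; its constant term is `⁅P(x), x⁆`.
The characteristic assumption leaves only the case `|F| = r + 1`, where instead
`G = c (X ^ (r + 1) - X)` with `c = ⁅P(1), x⁆`. Comparing the coefficients of `1` and `X` gives
`x c = 0` whenever `x² = 0`, i.e. `x P(1) x = 0`; this forces `P(1)` to be scalar, so `c = 0`.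
-/

open Matrix Polynomial Cardinal

theorem natCast_add_one_le_mk_of_charP {R : Type*} [NonAssocRing R] {r : ℕ}
    (hchar : ∀ p : ℕ, CharP R p → p = 0 ∨ r < p) : ((r + 1 : ℕ) : Cardinal) ≤ #R := by
  have hinj : Function.Injective fun i : Fin (r + 1) => ((i : ℕ) : R) := by
    intro i j hij
    rcases hchar (ringChar R) inferInstance with h0 | hlt
    · have : CharP R 0 := h0 ▸ ringChar.charP R
      have : CharZero R := CharP.charP_to_charZero R
      exact Fin.ext (Nat.cast_injective hij)
    · exact Fin.ext (CharP.natCast_injOn_Iio R (ringChar R) (Set.mem_Iio.2 (by omega))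
        (Set.mem_Iio.2 (by omega)) hij)
  simpa using lift_mk_le_lift_mk_of_injective hinj

theorem Matrix.commute_of_forall_mul_mul_eq_zero {n α : Type*} [Fintype n] [DecidableEq n]
    [CommRing α] {A : Matrix n n α} (hA : ∀ y : Matrix n n α, y * y = 0 → y * A * y = 0)
    (x : Matrix n n α) : Commute A x := by
  have off_diag : ∀ i j, i ≠ j → A i j = 0 := by
    intro i j hij
    have := congr_fun₂ (hA (single j i 1) (by simp [hij])) j i
    simpa [single_mul_mul_single] using this
  have diag : ∀ i j, i ≠ j → A i i = A j j := by
    intro i j hij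
    -- `y = (eᵢ - eⱼ)(eᵢ + eⱼ)ᵀ` squares to zero and `(y A y)ᵢᵢ = Aᵢᵢ - Aⱼⱼ`.
    have := congr_fun₂ (hA (single i i 1 + single i j 1 - single j i 1 - single j j 1)
      (by simp [add_mul, mul_add, sub_mul, mul_sub, hij, hij.symm])) i i
    simp only [sub_mul, add_mul, mul_sub, mul_add, single_mul_mul_single, one_mul, mul_one,
      off_diag i j hij, off_diag j i hij.symm, mul_zero, single_zero, add_zero, sub_zero, zero_add,
      sub_apply, add_apply, single_apply_same, hij.symm, and_true, not_false_eq_true,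
      single_apply_of_ne, and_false, and_self, sub_self, zero_apply] at this
    linear_combination this
  obtain ⟨c, rfl⟩ := mem_range_scalar_of_commute_single (n := n) (M := A) fun i j hij => by
    ext a b
    by_cases ha : a = i <;> by_cases hb : b = j <;>
      simp [ha, hb, single_mul_apply_same, mul_single_apply_same, single_mul_apply_of_ne,
        mul_single_apply_of_ne, off_diag, fun k l (h : l ≠ k) => off_diag k l h.symm,
        (diag i j hij).symm]
  exact scalar_commute c (Commute.all c) x

namespace Polynomial

section Ring

variable {A : Type*} [Ring A]

theorem coeff_lie_C (f : A[X]) (x : A) (k : ℕ) : ⁅f, C x⁆.coeff k = ⁅f.coeff k, x⁆ := by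
  simp only [Ring.lie_def, coeff_sub, coeff_mul_C, coeff_C_mul]

theorem natDegree_lie_C_le (f : A[X]) (x : A) : ⁅f, C x⁆.natDegree ≤ f.natDegree :=
  (natDegree_sub_le _ _).trans (max_le (natDegree_mul_C_le _ _) (natDegree_C_mul_le _ _))

theorem eval_mul_of_forall_commute {z : A} (hz : ∀ a, Commute a z) (f g : A[X]) :
    (f * g).eval z = f.eval z * g.eval z :=
  eval₂_mul_noncomm _ _ fun _ => hz _

theorem mul_eq_zero_of_X_add_C_mul_eq_C_mul_X_pow_sub_X {x c : A} {f : A[X]} {N : ℕ}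
    (hN : 2 ≤ N) (hx : x * x = 0) (h : (X + C x) * f = C c * (X ^ N - X)) : x * c = 0 := by
  have h₀ := congr_arg (coeff · 0) h
  have h₁ := congr_arg (coeff · 1) h
  have hN₀ : 0 ≠ N := by omega
  have hN₁ : 1 ≠ N := by omega
  simp only [add_mul, coeff_add, mul_coeff_zero, coeff_X_zero, zero_mul, coeff_C_zero, zero_add,
    coeff_sub, coeff_X_pow, hN₀, ↓reduceIte, sub_self, mul_zero, coeff_X_mul, coeff_C_mul, hN₁,
    coeff_X_one, zero_sub, mul_neg, mul_one] at h₀ h₁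
  rw [← neg_eq_zero, ← mul_neg, ← h₁, mul_add, h₀, ← mul_assoc, hx, zero_mul, add_zero]

end Ring

variable {m : Type*} [Fintype m] [DecidableEq m]

theorem eq_zero_of_forall_eval_scalar_eq_zero_of_natDegree_lt_card {R : Type*} [CommRing R]
    [IsDomain R] {G : (Matrix m m R)[X]} (hG : (G.natDegree : Cardinal) < #R)
    (h : ∀ t, G.eval (scalar m t) = 0) : G = 0 := by
  apply matPolyEquiv.symm.injective
  ext i j : 1
  rw [map_zero, Matrix.zero_apply]
  refine eq_zero_of_forall_eval_zero_of_natDegree_lt_card _ (fun t => ?_) (hG.trans_le' ?_)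
  · rw [← matPolyEquiv_eval, AlgEquiv.apply_symm_apply, h, Matrix.zero_apply]
  · exact_mod_cast natDegree_le_iff_coeff_eq_zero.2 fun k hk => by
      rw [matPolyEquiv_symm_apply_coeff, coeff_eq_zero_of_natDegree_lt hk, Matrix.zero_apply]

theorem eq_C_mul_X_pow_sub_X_of_forall_eval_scalar_eq_zero {K : Type*} [Field K]
    {G : (Matrix m m K)[X]} {N : ℕ} (hK : #K = N) (hG : G.natDegree ≤ N)
    (h : ∀ t, G.eval (scalar m t) = 0) : G = C (G.coeff N) * (X ^ N - X) := by
  obtain ⟨_, hN⟩ := mk_eq_nat_iff_fintype.1 hK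
  rw [← sub_eq_zero]
  apply eq_zero_of_forall_eval_scalar_eq_zero_of_natDegree_lt_card
  · have hN₁ : 1 < N := hN ▸ Fintype.one_lt_card
    have : (G - C (G.coeff N) * (X ^ N - X)).natDegree < N := by
      refine Nat.lt_of_le_pred (by omega) (natDegree_le_iff_coeff_eq_zero.2 fun k hk => ?_)
      rcases (Nat.le_of_pred_lt hk).eq_or_lt with rfl | hk
      · simp [coeff_X, hN₁.ne]
      · simp [coeff_X, coeff_X_pow, coeff_eq_zero_of_natDegree_lt (hG.trans_lt hk), hk.ne',
          (hN₁.trans hk).ne]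
    rw [hK]
    exact_mod_cast this
  · intro t
    rw [eval_sub, eval_C_mul, eval_sub, eval_X_pow, eval_X, h, ← map_pow, ← hN,
      FiniteField.pow_card, sub_self, mul_zero, sub_zero]

end Polynomial

namespace MultilinearMap

theorem map_add_smul_diag {R M N ι : Type*} [CommSemiring R] [AddCommMonoid M] [Module R M]
    [AddCommMonoid N] [Module R N] [Fintype ι] [DecidableEq ι]
    (p : MultilinearMap R (fun _ : ι => M) N) (x y : M) (t : R) :
    p (fun _ => x + t • y) =
      ∑ s : Finset ι, t ^ s.card • p (s.piecewise (fun _ => y) (fun _ => x)) := by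
  rw [show (fun _ : ι => x + t • y) = (fun _ => t • y) + fun _ => x from
    funext fun _ => add_comm _ _, map_add_univ]
  refine Finset.sum_congr rfl fun s _ => ?_
  rw [← Finset.prod_const, ← map_piecewise_smul]
  congr 1
  ext i
  by_cases hi : i ∈ s <;> simp [hi]

variable {R A ι : Type*} [CommRing R] [Ring A] [Algebra R A] [Fintype ι] [DecidableEq ι]
  (p : MultilinearMap R (fun _ : ι => A) A) (x : A)

/-- The polynomial `p (x + X, …, x + X)`. -/
noncomputable def translatePoly : A[X] :=
  ∑ s : Finset ι, C (p (s.piecewise (fun _ => 1) (fun _ => x))) * X ^ s.card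

theorem eval_translatePoly (t : R) :
    (p.translatePoly x).eval (algebraMap R A t) = p (fun _ => x + algebraMap R A t) := by
  rw [Algebra.algebraMap_eq_smul_one, map_add_smul_diag, translatePoly, eval_finsetSum]
  refine Finset.sum_congr rfl fun s _ => ?_
  rw [eval_C_mul, eval_X_pow, _root_.smul_pow, one_pow, mul_smul_one]

theorem coeff_translatePoly (k : ℕ) : (p.translatePoly x).coeff k =
    ∑ s : Finset ι with s.card = k, p (s.piecewise (fun _ => 1) (fun _ => x)) := by
  simp [translatePoly, finsetSum_coeff, Finset.sum_filter, eq_comm]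

theorem coeff_translatePoly_zero : (p.translatePoly x).coeff 0 = p fun _ => x := by
  simp [coeff_translatePoly, Finset.filter_eq']

theorem coeff_translatePoly_card :
    (p.translatePoly x).coeff (Fintype.card ι) = p fun _ => 1 := by
  simp [coeff_translatePoly, Finset.card_eq_iff_eq_univ, Finset.filter_eq']

theorem natDegree_translatePoly_le : (p.translatePoly x).natDegree ≤ Fintype.card ι :=
  natDegree_sum_le_of_forall_le _ _ fun s _ =>
    (natDegree_C_mul_X_pow_le _ _).trans s.card_le_univ

/-- The polynomial `(x + X) * ⁅p (x + X, …, x + X), x + X⁆`. -/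
noncomputable def mulCommutatorPoly : A[X] :=
  (X + C x) * ⁅p.translatePoly x, C x⁆

theorem eval_mulCommutatorPoly (t : R) : (p.mulCommutatorPoly x).eval (algebraMap R A t) =
    (x + algebraMap R A t) * ⁅p fun _ => x + algebraMap R A t, x + algebraMap R A t⁆ := by
  have hz : ∀ a, Commute a (algebraMap R A t) := fun a => (Algebra.commutes t a).symm
  simp only [mulCommutatorPoly, Ring.lie_def, eval_mul_of_forall_commute hz, eval_sub, eval_add,
    eval_X, eval_C, eval_translatePoly, mul_add, add_mul, (hz _).eq]
  noncomm_ring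

theorem natDegree_mulCommutatorPoly_le :
    (p.mulCommutatorPoly x).natDegree ≤ Fintype.card ι + 1 := by
  refine natDegree_mul_le.trans (add_comm 1 _ ▸ add_le_add ?_ ?_)
  · exact (natDegree_add_le _ _).trans (by simp [natDegree_X_le])
  · exact (natDegree_lie_C_le _ _).trans (p.natDegree_translatePoly_le x)

theorem coeff_mulCommutatorPoly_card_add_one :
    (p.mulCommutatorPoly x).coeff (Fintype.card ι + 1) = ⁅p fun _ => 1, x⁆ := by
  have htop : ⁅p.translatePoly x, C x⁆.coeff (Fintype.card ι + 1) = 0 :=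
    coeff_eq_zero_of_natDegree_lt ((natDegree_lie_C_le _ _).trans_lt
      (Nat.lt_succ_of_le (p.natDegree_translatePoly_le x)))
  simp [mulCommutatorPoly, add_mul, coeff_C_mul, htop, coeff_lie_C, coeff_translatePoly_card]

theorem lie_eq_zero_of_mulCommutatorPoly_eq_zero (h : p.mulCommutatorPoly x = 0) :
    ⁅p fun _ => x, x⁆ = 0 := by
  rw [mulCommutatorPoly, (monic_X_add_C x).mul_right_eq_zero_iff] at h
  simpa [coeff_lie_C, coeff_translatePoly_zero] using congrArg (coeff · 0) h

end MultilinearMap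

theorem commuting_of_mul_left_commutator_eq_zero_general {F : Type*} [Field F] (n r : ℕ)
    (hchar : ∀ p : ℕ, CharP F p → p = 0 ∨ r < p)
    (p : MultilinearMap F (fun _ : Fin r => Matrix (Fin n) (Fin n) F)
      (Matrix (Fin n) (Fin n) F))
    (h : ∀ x : Matrix (Fin n) (Fin n) F, x * ⁅p (fun _ => x), x⁆ = 0) :
    ∀ x : Matrix (Fin n) (Fin n) F, ⁅p (fun _ => x), x⁆ = 0 := by
  have hG : ∀ x t, (p.mulCommutatorPoly x).eval (scalar (Fin n) t) = 0 := fun x t => by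
    rw [show scalar (Fin n) t = algebraMap F _ t from rfl, p.eval_mulCommutatorPoly]
    exact h _
  have hdeg : ∀ x, (p.mulCommutatorPoly x).natDegree ≤ r + 1 := fun x => by
    simpa using p.natDegree_mulCommutatorPoly_le x
  have hcoeff : ∀ x, (p.mulCommutatorPoly x).coeff (r + 1) = ⁅p fun _ => 1, x⁆ := fun x => by
    simpa using p.coeff_mulCommutatorPoly_card_add_one x
  intro x
  apply p.lie_eq_zero_of_mulCommutatorPoly_eq_zero
  rcases (natCast_add_one_le_mk_of_charP hchar).lt_or_eq with hbig | hcard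
  · exact eq_zero_of_forall_eval_scalar_eq_zero_of_natDegree_lt_card
      ((Nat.cast_le.2 (hdeg x)).trans_lt hbig) (hG x)
  have hr : 2 ≤ r + 1 := by
    have := one_lt_iff_nontrivial.2 (inferInstance : Nontrivial F)
    rw [← hcard] at this
    exact_mod_cast this
  have hC : ∀ y, p.mulCommutatorPoly y = C ⁅p fun _ => 1, y⁆ * (X ^ (r + 1) - X) := fun y => by
    rw [← hcoeff]
    exact eq_C_mul_X_pow_sub_X_of_forall_eval_scalar_eq_zero hcard.symm (hdeg y) (hG y)
  have hA : ∀ y, Commute (p fun _ => 1) y := commute_of_forall_mul_mul_eq_zero fun y hy => by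
    have := mul_eq_zero_of_X_add_C_mul_eq_C_mul_X_pow_sub_X hr hy (hC y)
    rwa [Ring.lie_def, mul_sub, ← mul_assoc, ← mul_assoc, hy, zero_mul, sub_zero] at this
  rw [hC x, commute_iff_lie_eq.1 (hA x), C_0, zero_mul]

/-- If `P` is the trace of an `r`-linear function on `Mₙ(F)` and `x·[P(x),x] = 0` for all
`x`, then `[P(x),x] = 0` for all `x`, i.e. `P` is commuting (`char F = 0` or `char F > r`). -/
theorem commuting_of_mul_left_commutator_eq_zero {F : Type*} [Field F] (n r : ℕ) (hn : 1 ≤ n)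
    (hchar : ∀ p : ℕ, CharP F p → p = 0 ∨ r < p)
    (p : MultilinearMap F (fun _ : Fin r => Matrix (Fin n) (Fin n) F)
      (Matrix (Fin n) (Fin n) F))
    (h : ∀ x : Matrix (Fin n) (Fin n) F, x * ⁅p (fun _ => x), x⁆ = 0) :
    ∀ x : Matrix (Fin n) (Fin n) F, ⁅p (fun _ => x), x⁆ = 0 :=
  commuting_of_mul_left_commutator_eq_zero_general n r hchar p h
end

section
/- Let F be a field with char(F) = 0 or char(F) > n+1, and let K = {1,...,n+1}. Suppose multilinear functions F₁,...,F_{n+1} : Mₙ(F)ⁿ → Mₙ(F) satisfy Σ_{k=1}^{n+1} Fₖ(x₁,...,x̂ₖ,...,x_{n+1})xₖ = 0 for all xᵢ ∈ Mₙ(F), and each Fₖ is symmetric enough that its trace Tₖ(x) = Fₖ(x,...,x) is defined. Then each Tₖ satisfies Tₖ(x) = det(x)·Sₖ(x) for some constant matrix Sₖ ∈ Mₙ(F) (the trace of a 0-linear function). -/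
/-!
Extend scalars to an algebraic closure `K` of `F`, where the Nullstellensatz applies. If `y` is
singular, put `z` in the `k`-th slot and `y` in all the others: the identity gives `Tₖ(y) z = B y`
for every `z`, and multiplying by a kernel vector of `y` forces `Tₖ(y) = 0`. So every entry of
`Tₖ` is a homogeneous polynomial of degree `n` in the entries of `x` vanishing on the hypersurface
`det x = 0`. The generic determinant is squarefree (it has degree at most one in each variable),
so it divides that entry, and comparing degrees the quotient is a constant.
-/

open Matrix MvPolynomial

theorem Matrix.eq_sum_smul_single {R m n : Type*} [Semiring R] [Fintype m] [DecidableEq m]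
    [Fintype n] [DecidableEq n] (x : Matrix m n R) :
    x = ∑ p : m × n, x p.1 p.2 • single p.1 p.2 (1 : R) := by
  simp_rw [smul_single, smul_eq_mul, mul_one, Fintype.sum_prod_type]
  exact matrix_eq_sum_single x

namespace MultilinearMap

variable {R ι m n : Type*} [Fintype ι] [DecidableEq ι] [Fintype m] [DecidableEq m] [Fintype n]
  [DecidableEq n]

theorem apply_eq_sum_prod_smul_single {N : Type*} [CommSemiring R] [AddCommMonoid N] [Module R N]
    (g : MultilinearMap R (fun _ : ι => Matrix m n R) N) (v : ι → Matrix m n R) :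
    g v = ∑ r : ι → m × n, (∏ i, v i (r i).1 (r i).2) • g fun i => single (r i).1 (r i).2 1 := by
  conv_lhs => rw [funext fun i => (v i).eq_sum_smul_single]
  simp_rw [g.map_sum, g.map_smul_univ]

theorem exists_isHomogeneous_eval_eq_apply_const [CommSemiring R]
    (g : MultilinearMap R (fun _ : ι => Matrix m n R) R) :
    ∃ q : MvPolynomial (m × n) R, q.IsHomogeneous (Fintype.card ι) ∧
      ∀ y : Matrix m n R, eval (fun p => y p.1 p.2) q = g fun _ => y := by
  refine ⟨∑ r : ι → m × n, C (g fun i => single (r i).1 (r i).2 1) * ∏ i, X (r i), ?_, fun y => ?_⟩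
  · refine IsHomogeneous.sum _ _ _ fun r _ => ?_
    have := (IsHomogeneous.prod Finset.univ _ (fun _ => 1) fun i _ => isHomogeneous_X R (r i)).C_mul
      (g fun i => single (r i).1 (r i).2 1)
    rwa [Finset.sum_const, Finset.card_univ, smul_eq_mul, mul_one] at this
  · simp [g.apply_eq_sum_prod_smul_single (fun _ => y), mul_comm]

variable {p q : Type*} (A : Type*) [CommSemiring R] [CommSemiring A] [Algebra R A]

noncomputable def matrixBaseChange
    (g : MultilinearMap R (fun _ : ι => Matrix m n R) (Matrix p q R)) :
    MultilinearMap A (fun _ : ι => Matrix m n A) (Matrix p q A) :=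
  ∑ r : ι → m × n, ((MultilinearMap.mkPiAlgebra A ι A).compLinearMap
      fun i => entryLinearMap A A (r i).1 (r i).2).smulRight
    ((g fun i => single (r i).1 (r i).2 1).map (algebraMap R A))

theorem matrixBaseChange_apply (g : MultilinearMap R (fun _ : ι => Matrix m n R) (Matrix p q R))
    (v : ι → Matrix m n A) :
    g.matrixBaseChange A v = ∑ r : ι → m × n,
      (∏ i, v i (r i).1 (r i).2) • (g fun i => single (r i).1 (r i).2 1).map (algebraMap R A) := by
  simp [matrixBaseChange]

theorem matrixBaseChange_apply_map
    (g : MultilinearMap R (fun _ : ι => Matrix m n R) (Matrix p q R)) (v : ι → Matrix m n R) :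
    g.matrixBaseChange A (fun i => (v i).map (algebraMap R A)) = (g v).map (algebraMap R A) := by
  ext a b
  simp [matrixBaseChange_apply, g.apply_eq_sum_prod_smul_single v, Matrix.sum_apply]

end MultilinearMap

theorem MvPolynomial.eq_C_of_isHomogeneous_mul {σ R : Type*} [CommSemiring R] [NoZeroDivisors R]
    {p q : MvPolynomial σ R} {d : ℕ} (hp : p.IsHomogeneous d) (hp0 : p ≠ 0)
    (hpq : (p * q).IsHomogeneous d) : q = C (coeff 0 q) := by
  rcases eq_or_ne q 0 with rfl | hq0
  · simp
  have hdeg := hpq.totalDegree (mul_ne_zero hp0 hq0)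
  rw [totalDegree_mul_of_isDomain hp0 hq0, hp.totalDegree hp0] at hdeg
  exact totalDegree_eq_zero_iff_eq_C.mp (by omega)

namespace Matrix

variable {n : Type*} [Fintype n] [DecidableEq n]

theorem degreeOf_det_mvPolynomialX_le_one {R : Type*} [CommRing R] [Nontrivial R] (v : n × n) :
    degreeOf v (det (mvPolynomialX n n R)) ≤ 1 := by
  rw [det_apply']
  refine (degreeOf_sum_le _ _ _).trans (Finset.sup_le fun σ _ => ?_)
  refine (degreeOf_mul_le _ _ _).trans ?_
  rw [← map_intCast (C : R →+* MvPolynomial (n × n) R), degreeOf_C, zero_add]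
  refine (degreeOf_prod_le _ _ _).trans ?_
  simp only [mvPolynomialX_apply, degreeOf_X]
  rw [Finset.sum_boole]
  exact Finset.card_le_one.2 fun i hi j hj => by simp_all

theorem isHomogeneous_det_mvPolynomialX (R : Type*) [CommRing R] :
    (det (mvPolynomialX n n R)).IsHomogeneous (Fintype.card n) := by
  rw [det_apply']
  refine IsHomogeneous.sum _ _ _ fun σ _ => ?_
  rw [← map_intCast (C : R →+* MvPolynomial (n × n) R)]
  have := (IsHomogeneous.prod Finset.univ _ (fun _ => 1) fun i _ => isHomogeneous_X R (σ i, i)).C_mul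
    ((Equiv.Perm.sign σ : ℤ) : R)
  rwa [Finset.sum_const, Finset.card_univ, smul_eq_mul, mul_one] at this

theorem squarefree_det_mvPolynomialX (K : Type*) [Field K] :
    Squarefree (det (mvPolynomialX n n K)) := by
  rintro q ⟨r, hr⟩
  have hdet := det_mvPolynomialX_ne_zero n K
  have hq : q ≠ 0 := by rintro rfl; simp_all
  have hr0 : r ≠ 0 := by rintro rfl; simp_all
  have hdeg (v : n × n) : degreeOf v q = 0 := by
    have hle := degreeOf_det_mvPolynomialX_le_one (R := K) v
    rw [hr, degreeOf_mul_eq (mul_ne_zero hq hq) hr0, degreeOf_mul_eq hq hq] at hle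
    omega
  have hC : q = C (coeff 0 q) := totalDegree_eq_zero_iff_eq_C.mp <|
    (totalDegree_eq_zero_iff _ q).mpr fun m hm v => by
      simpa [hdeg v] using le_degreeOf_of_mem_support v hm
  rw [hC]
  exact (isUnit_iff_ne_zero.mpr fun h => hq (by rw [hC, h, map_zero])).map C

theorem det_mvPolynomialX_dvd_of_eval_eq_zero {K : Type*} [Field K] [IsAlgClosed K]
    {q : MvPolynomial (n × n) K}
    (hq : ∀ y : Matrix n n K, det y = 0 → eval (fun p => y p.1 p.2) q = 0) :
    det (mvPolynomialX n n K) ∣ q := by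
  have hmem : q ∈ vanishingIdeal K (zeroLocus K (Ideal.span {det (mvPolynomialX n n K)})) :=
    fun z hz => hq (of fun i j => z (i, j)) <| by
      rw [← eval_det_mvPolynomialX]
      exact hz _ (Ideal.subset_span rfl)
  rwa [vanishingIdeal_zeroLocus_eq_radical,
    (isRadical_iff_span_singleton.mp (squarefree_det_mvPolynomialX (n := n) K).isRadical).radical,
    Ideal.mem_span_singleton] at hmem

theorem eq_zero_of_forall_exists_mul_eq_mul {K : Type*} [Field K] {T y : Matrix n n K}
    (hy : det y = 0) (h : ∀ z, ∃ B, T * z = B * y) : T = 0 := by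
  obtain ⟨w, hw, hyw⟩ := exists_mulVec_eq_zero_iff.mpr hy
  obtain ⟨b, hb⟩ : ∃ b, w b ≠ 0 := Function.ne_iff.mp hw
  ext i a
  obtain ⟨B, hB⟩ := h (single a b 1)
  have hBw := congr(($hB *ᵥ w) i)
  rw [← mulVec_mulVec, ← mulVec_mulVec, hyw, mulVec_zero, single_mulVec_eq, mulVec_smul,
    mulVec_single_one] at hBw
  simpa [hb] using hBw

end Matrix

theorem MultilinearMap.apply_const_eq_det_mul {K n : Type*} [Field K] [IsAlgClosed K]
    [Fintype n] [DecidableEq n] (g : MultilinearMap K (fun _ : n => Matrix n n K) K)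
    (hg : ∀ y : Matrix n n K, det y = 0 → g (fun _ => y) = 0) (y : Matrix n n K) :
    g (fun _ => y) = det y * g (fun _ => 1) := by
  obtain ⟨q, hq, hqg⟩ := g.exists_isHomogeneous_eval_eq_apply_const
  obtain ⟨s, rfl⟩ := det_mvPolynomialX_dvd_of_eval_eq_zero fun y hy => (hqg y).trans (hg y hy)
  rw [eq_C_of_isHomogeneous_mul (isHomogeneous_det_mvPolynomialX K)
    (det_mvPolynomialX_ne_zero n K) hq] at hqg
  have heval (y : Matrix n n K) : g (fun _ => y) = det y * coeff 0 s := by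
    rw [← hqg, map_mul, eval_C, eval_det_mvPolynomialX]
    rfl
  rw [heval y, heval 1, det_one, one_mul]

def IsLeftFunctionalIdentity {R n : Type*} [CommSemiring R] [Fintype n] {d : ℕ}
    (G : Fin (d + 1) → MultilinearMap R (fun _ : Fin d => Matrix n n R) (Matrix n n R)) : Prop :=
  ∀ x : Fin (d + 1) → Matrix n n R, ∑ k, G k (fun i => x (k.succAbove i)) * x k = 0

namespace IsLeftFunctionalIdentity

variable {R n : Type*} [Fintype n] [DecidableEq n] {d : ℕ}

theorem matrixBaseChange [CommSemiring R]
    {G : Fin (d + 1) → MultilinearMap R (fun _ : Fin d => Matrix n n R) (Matrix n n R)}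
    (hG : IsLeftFunctionalIdentity G) (A : Type*) [CommSemiring A] [Algebra R A] :
    IsLeftFunctionalIdentity fun k => (G k).matrixBaseChange A := by
  have hmap (x : Fin (d + 1) → Matrix n n R) : ∑ k, (G k).matrixBaseChange A
      (fun i => (x (k.succAbove i)).map (algebraMap R A)) * (x k).map (algebraMap R A) = 0 := by
    have hx := congr((algebraMap R A).mapMatrix $(hG x))
    rw [map_sum, map_zero] at hx
    simpa [RingHom.mapMatrix_apply, MultilinearMap.matrixBaseChange_apply_map] using hx
  let Φ : MultilinearMap A (fun _ : Fin (d + 1) => Matrix n n A) (Matrix n n A) :=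
    ∑ k, LinearMap.uncurryMid k
      { toFun z := (LinearMap.mulRight A z).compMultilinearMap ((G k).matrixBaseChange A)
        map_add' z w := MultilinearMap.ext fun _ => mul_add _ _ _
        map_smul' c z := MultilinearMap.ext fun _ => mul_smul_comm _ _ _ }
  have hΦ : Φ = 0 := (Module.Basis.ext_multilinear (fun _ => stdBasis A n n)) fun r => by
    have hr := hmap fun k => single (r k).1 (r k).2 1
    simp only [map_single, map_one] at hr
    simp only [Φ, fun p : n × n => stdBasis_eq_single A p.1 p.2, _root_.sum_apply,
      LinearMap.uncurryMid_apply]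
    exact hr
  intro x
  have hx := congr($hΦ x)
  simp only [Φ, _root_.sum_apply, LinearMap.uncurryMid_apply, _root_.zero_apply] at hx
  exact hx

theorem apply_const_eq_zero [Field R]
    {G : Fin (d + 1) → MultilinearMap R (fun _ : Fin d => Matrix n n R) (Matrix n n R)}
    (hG : IsLeftFunctionalIdentity G) (k : Fin (d + 1)) {y : Matrix n n R} (hy : det y = 0) :
    G k (fun _ => y) = 0 := by
  refine eq_zero_of_forall_exists_mul_eq_mul hy fun z => ?_
  let x := Function.update (fun _ => y) k z
  have hk : G k (fun i => x (k.succAbove i)) * x k = G k (fun _ => y) * z := by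
    simp [x, Fin.succAbove_ne]
  have hrest : ∑ j ∈ Finset.univ.erase k, G j (fun i => x (j.succAbove i)) * x j =
      (∑ j ∈ Finset.univ.erase k, G j fun i => x (j.succAbove i)) * y := by
    rw [Finset.sum_mul]
    exact Finset.sum_congr rfl fun j hj => by simp [x, Finset.ne_of_mem_erase hj]
  have hx := hG x
  rw [← Finset.add_sum_erase _ _ (Finset.mem_univ k), hk, hrest] at hx
  exact ⟨_, by rw [neg_mul]; exact eq_neg_of_add_eq_zero_left hx⟩

theorem apply_const_eq_det_smul {K : Type*} [Field K] [IsAlgClosed K]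
    {G : Fin (d + 1) → MultilinearMap K (fun _ : Fin d => Matrix (Fin d) (Fin d) K)
      (Matrix (Fin d) (Fin d) K)}
    (hG : IsLeftFunctionalIdentity G) (k : Fin (d + 1)) (y : Matrix (Fin d) (Fin d) K) :
    G k (fun _ => y) = det y • G k (fun _ => 1) := by
  ext i j
  exact ((entryLinearMap K K i j).compMultilinearMap (G k)).apply_const_eq_det_mul
    (fun y hy => by simp [hG.apply_const_eq_zero k hy]) y

end IsLeftFunctionalIdentity

theorem leftFI_trace_det_divides_general {F : Type*} [Field F] (n : ℕ)
    (G : Fin (n + 1) → MultilinearMap F (fun _ : Fin n => Matrix (Fin n) (Fin n) F)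
      (Matrix (Fin n) (Fin n) F))
    (hFI : ∀ x : Fin (n + 1) → Matrix (Fin n) (Fin n) F,
      ∑ k : Fin (n + 1), G k (fun i => x (k.succAbove i)) * x k = 0) :
    ∀ k : Fin (n + 1), ∃ S : Matrix (Fin n) (Fin n) F,
      ∀ x : Matrix (Fin n) (Fin n) F, G k (fun _ => x) = Matrix.det x • S := by
  intro k
  refine ⟨G k fun _ => 1, fun x => ?_⟩
  let K := AlgebraicClosure F
  have hmap (y : Matrix (Fin n) (Fin n) F) := (G k).matrixBaseChange_apply_map K fun _ => y
  have h := (IsLeftFunctionalIdentity.matrixBaseChange hFI K).apply_const_eq_det_smul k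
    (x.map (algebraMap F K))
  rw [hmap, ← Matrix.map_one _ (map_zero (algebraMap F K)) (map_one _), hmap] at h
  refine Matrix.map_injective (algebraMap F K).injective ?_
  beta_reduce
  rw [h, Matrix.map_smul' _ _ _ (map_mul _), RingHom.map_det, RingHom.mapMatrix_apply]

/-- The `m = n + 1` case of divisibility of traces by the determinant: if multilinear
`F₁,...,F_{n+1}` on `Mₙ(F)` satisfy `Σₖ Fₖ(x₁,...,x̂ₖ,...,x_{n+1})xₖ = 0`
(`char F = 0` or `char F > n + 1`), then each trace `Tₖ(x) = Fₖ(x,...,x)` equals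
`det(x) · Sₖ` for a constant matrix `Sₖ`. -/
theorem leftFI_trace_det_divides {F : Type*} [Field F] (n : ℕ) (hn : 1 ≤ n)
    (hchar : ∀ p : ℕ, CharP F p → p = 0 ∨ n + 1 < p)
    (G : Fin (n + 1) → MultilinearMap F (fun _ : Fin n => Matrix (Fin n) (Fin n) F)
      (Matrix (Fin n) (Fin n) F))
    (hFI : ∀ x : Fin (n + 1) → Matrix (Fin n) (Fin n) F,
      ∑ k : Fin (n + 1), G k (fun i => x (k.succAbove i)) * x k = 0) :
    ∀ k : Fin (n + 1), ∃ S : Matrix (Fin n) (Fin n) F,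
      ∀ x : Matrix (Fin n) (Fin n) F, G k (fun _ => x) = Matrix.det x • S :=
  leftFI_trace_det_divides_general n G hFI
end
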